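/- Let (X,d) be a complete metric space, φ : X → ℝ lower semicontinuous and bounded below, and let η : [0,∞) → [0,∞) be nondecreasing with η(0) = 0 and η(t) > 0 for all t > 0 such that η(t)/t is bounded below by a positive constant on (0, δ) for some δ > 0. Then any T : X → X with η(d(x,Tx)) ≤ φ(x) − φ(Tx) for all x ∈ X has a fixed point. -/

import Mathlib

/-!
Ekeland's variational principle, started at a point `x₀` where `φ` is within `c δ / 2` of its
infimum, gives `z` with `φ z ≤ φ x₀` and `φ z < φ y + c d(z, y)` for every `y ≠ z`. If `Tz ≠ z`,
put `t = d(z, Tz)`. For `t < δ` the growth bound `c t ≤ η t ≤ φ z - φ (Tz)` contradicts the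
second property; for `t ≥ δ` monotonicity gives `c δ / 2 ≤ η t ≤ φ z - φ (Tz)`, which contradicts
the choice of `x₀`.
-/

open Set Filter Topology Metric

section Ekeland

variable {X : Type*} [MetricSpace X] {φ : X → ℝ} {ε : ℝ}

/-- The lower set of `x` for the Brøndsted order of `(φ, ε)`. -/
def ekelandSet (φ : X → ℝ) (ε : ℝ) (x : X) : Set X :=
  {y | φ y + ε * dist x y ≤ φ x}

theorem self_mem_ekelandSet (x : X) : x ∈ ekelandSet φ ε x := by
  simp [ekelandSet]

theorem ekelandSet_subset (hε : 0 ≤ ε) {x y : X} (hy : y ∈ ekelandSet φ ε x) :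
    ekelandSet φ ε y ⊆ ekelandSet φ ε x := by
  intro w hw
  have := mul_le_mul_of_nonneg_left (dist_triangle x y w) hε
  simp only [ekelandSet, mem_ofPred_eq] at hy hw ⊢
  linarith

theorem isClosed_ekelandSet (hφ : LowerSemicontinuous φ) (x : X) :
    IsClosed (ekelandSet φ ε x) :=
  (hφ.add (continuous_const.mul (continuous_const.dist continuous_id)).lowerSemicontinuous)
    |>.isClosed_preimage (φ x)

/-- An almost minimiser `y` of `φ` on `ekelandSet φ ε x` has a small `ekelandSet`. -/
theorem exists_mem_ekelandSet_subset_closedBall (hbd : BddBelow (range φ)) (hε : 0 < ε)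
    (x : X) {r : ℝ} (hr : 0 < r) :
    ∃ y ∈ ekelandSet φ ε x, ekelandSet φ ε y ⊆ closedBall y r := by
  obtain ⟨_, ⟨y, hy, rfl⟩, hy_lt⟩ := exists_lt_of_csInf_lt (s := φ '' ekelandSet φ ε x)
    ⟨φ x, x, self_mem_ekelandSet x, rfl⟩ (lt_add_of_pos_right _ (mul_pos hε hr))
  refine ⟨y, hy, fun w hw => ?_⟩
  have hw_ge : sInf (φ '' ekelandSet φ ε x) ≤ φ w :=
    csInf_le (hbd.mono (image_subset_range _ _)) ⟨w, ekelandSet_subset hε.le hy hw, rfl⟩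
  have hw' : φ w + ε * dist y w ≤ φ y := hw
  rw [mem_closedBall, dist_comm, ← mul_le_mul_iff_of_pos_left hε]
  linarith

/-- Ekeland's variational principle (weak form). -/
theorem LowerSemicontinuous.exists_forall_lt_add_dist [CompleteSpace X]
    (hφ : LowerSemicontinuous φ) (hbd : BddBelow (range φ)) (hε : 0 < ε) (x₀ : X) :
    ∃ z, φ z + ε * dist x₀ z ≤ φ x₀ ∧ ∀ y ≠ z, φ z < φ y + ε * dist z y := by
  choose next next_mem next_subset using fun x (n : ℕ) =>
    exists_mem_ekelandSet_subset_closedBall hbd hε x (Nat.one_div_pos_of_nat (α := ℝ) (n := n))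
  let u : ℕ → X := fun n => Nat.rec x₀ (fun n x => next x n) n
  let K : ℕ → Set X := fun n => ekelandSet φ ε (u (n + 1))
  have hK_anti : Antitone K :=
    antitone_nat_of_succ_le fun n => ekelandSet_subset hε.le (next_mem _ _)
  have hK_bdd (n : ℕ) : Bornology.IsBounded (K n) :=
    isBounded_closedBall.subset (next_subset _ n)
  have hK_diam : Tendsto (fun n => diam (K n)) atTop (𝓝 0) := by
    refine squeeze_zero (fun _ => diam_nonneg) (fun n => ?_)
      (mul_zero (2 : ℝ) ▸ (tendsto_one_div_add_atTop_nhds_zero_nat (𝕜 := ℝ)).const_mul 2)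
    exact (diam_mono (next_subset _ n) isBounded_closedBall).trans
      (diam_closedBall Nat.one_div_pos_of_nat.le)
  obtain ⟨z, hz⟩ := nonempty_iInter_of_nonempty_biInter
    (fun n => isClosed_ekelandSet hφ _) hK_bdd
    (fun N => ⟨u (N + 1), mem_iInter₂.2 fun n hn => hK_anti hn (self_mem_ekelandSet _)⟩) hK_diam
  have hzK (n : ℕ) : z ∈ K n := mem_iInter.1 hz n
  refine ⟨z, ekelandSet_subset hε.le (next_mem x₀ 0) (hzK 0), fun y hyz => ?_⟩
  by_contra! hy
  have hyK (n : ℕ) : y ∈ K n := ekelandSet_subset hε.le (hzK n) hy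
  have hzy : dist z y ≤ 0 :=
    ge_of_tendsto' hK_diam fun n => dist_le_diam_of_mem (hK_bdd n) (hzK n) (hyK n)
  exact hyz (dist_le_zero.1 hzy).symm

end Ekeland

theorem kirk_problem_partial_answer_general {X : Type*} [MetricSpace X] [CompleteSpace X] [Nonempty X]
    (φ : X → ℝ) (hlsc : LowerSemicontinuous φ) (hbd : BddBelow (Set.range φ))
    (η : ℝ → ℝ)
    (hmono : ∀ s t : ℝ, 0 ≤ s → s ≤ t → η s ≤ η t)
    (hgrow : ∃ c > (0 : ℝ), ∃ δ > (0 : ℝ), ∀ t : ℝ, 0 < t → t < δ → c ≤ η t / t)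
    (T : X → X) (hT : ∀ x, η (dist x (T x)) ≤ φ x - φ (T x)) :
    ∃ x, T x = x := by
  obtain ⟨c, hc, δ, hδ, hcδ⟩ := hgrow
  have hη_half : c * (δ / 2) ≤ η (δ / 2) :=
    (le_div_iff₀ (half_pos hδ)).1 (hcδ _ (half_pos hδ) (half_lt_self hδ))
  obtain ⟨_, ⟨x₀, rfl⟩, hx₀⟩ := exists_lt_of_csInf_lt (range_nonempty φ)
    (lt_add_of_pos_right (sInf (range φ)) (mul_pos hc (half_pos hδ)))
  obtain ⟨z, hz₀, hz⟩ := hlsc.exists_forall_lt_add_dist hbd hc x₀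
  refine ⟨z, by_contra fun hTz => ?_⟩
  have hz_lt := hz (T z) hTz
  have hd : 0 < dist z (T z) := dist_pos.2 (Ne.symm hTz)
  rcases lt_or_ge (dist z (T z)) δ with hsmall | hlarge
  · have hη_lin := (le_div_iff₀ hd).1 (hcδ _ hd hsmall)
    linarith [hT z]
  · have hη_mono := hmono (δ / 2) (dist z (T z)) (half_pos hδ).le (by linarith)
    have hinf : sInf (range φ) ≤ φ (T z) := csInf_le hbd (mem_range_self _)
    linarith [hT z, mul_nonneg hc.le (dist_nonneg (x := x₀) (y := z))]

theorem kirk_problem_partial_answer {X : Type*} [MetricSpace X] [CompleteSpace X] [Nonempty X]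
    (φ : X → ℝ) (hlsc : LowerSemicontinuous φ) (hbd : BddBelow (Set.range φ))
    (η : ℝ → ℝ) (hnn : ∀ t, 0 ≤ t → 0 ≤ η t)
    (hmono : ∀ s t : ℝ, 0 ≤ s → s ≤ t → η s ≤ η t)
    (hη0 : η 0 = 0) (hpos : ∀ t : ℝ, 0 < t → 0 < η t)
    (hgrow : ∃ c > (0 : ℝ), ∃ δ > (0 : ℝ), ∀ t : ℝ, 0 < t → t < δ → c ≤ η t / t)
    (T : X → X) (hT : ∀ x, η (dist x (T x)) ≤ φ x - φ (T x)) :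
    ∃ x, T x = x :=
  kirk_problem_partial_answer_general φ hlsc hbd η hmono hgrow T hT
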